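/- Assume q ≥ 2, ν(∅) = 0, and that the matrix J = E_{Z∼p}[W(Z)W(Z)ᵀ] is invertible. With I = E_{Z∼p}[(ν(Z) − Z_q ν(1) − W(Z)ᵀ φ̃)² · W(Z)W(Z)ᵀ], I₂ = E_{Z∼p}[4·((ν(Z) + ν(1) − ν(1−Z))/2 − Z_q ν(1) − W(Z)ᵀ φ̃)² · W(Z)W(Z)ᵀ], and J₂ = 2J, the difference of asymptotic covariance matrices T − T₂ = J⁻¹ I J⁻¹ − J₂⁻¹ I₂ J₂⁻¹ is positive semidefinite. -/

import Mathlib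

open Finset

/-- Shapley value of player `j` for value function `ν` on coalitions of `Fin q`. -/
noncomputable def shapley {q : ℕ} (ν : Finset (Fin q) → ℝ) (j : Fin q) : ℝ :=
  ((q : ℝ))⁻¹ * ∑ C ∈ (Finset.univ.erase j).powerset,
    (((q - 1).choose C.card : ℝ))⁻¹ * (ν (insert j C) - ν C)

/-- The set of nonempty proper coalitions of `Fin q`. -/
def properCoalitions (q : ℕ) : Finset (Finset (Fin q)) :=
  Finset.univ.powerset.filter
    (fun C : Finset (Fin q) => C.Nonempty ∧ C ≠ Finset.univ)

/-- Shapley kernel weight of a coalition. -/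
noncomputable def kernelWeight (q : ℕ) (C : Finset (Fin q)) : ℝ :=
  ((q : ℝ) - 1) /
    ((q.choose C.card : ℝ) * (C.card : ℝ) * ((q : ℝ) - (C.card : ℝ)))

/-- Normalized Shapley kernel probability weights. -/
noncomputable def kernelProb (q : ℕ) (C : Finset (Fin q)) : ℝ :=
  kernelWeight q C / ∑ C' ∈ properCoalitions q, kernelWeight q C'

/-- The last player `q` (index `q - 1` in `Fin q`). -/
def lastPlayer (q : ℕ) (hq : 2 ≤ q) : Fin q := ⟨q - 1, by omega⟩

/-- Indicator `Z_q` of the last player belonging to the coalition `C`. -/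
noncomputable def Zlast (q : ℕ) (hq : 2 ≤ q) (C : Finset (Fin q)) : ℝ :=
  if lastPlayer q hq ∈ C then 1 else 0

/-- The vector `W(Z) = Z̃ - Z_q · 1̃ ∈ ℝ^{q-1}` for the coalition `C` with
indicator vector `Z`. -/
noncomputable def Wvec (q : ℕ) (hq : 2 ≤ q) (C : Finset (Fin q))
    (i : Fin (q - 1)) : ℝ :=
  (if Fin.castLE (Nat.sub_le q 1) i ∈ C then (1 : ℝ) else 0) - Zlast q hq C

/-- The first `q - 1` Shapley values `φ̃ ∈ ℝ^{q-1}`. -/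
noncomputable def shapleyTrunc (q : ℕ) (ν : Finset (Fin q) → ℝ)
    (i : Fin (q - 1)) : ℝ :=
  shapley ν (Fin.castLE (Nat.sub_le q 1) i)

/-- The shapResidual `ν(Z) - Z_q ν(1) - W(Z)ᵀ φ̃`. -/
noncomputable def shapResidual (q : ℕ) (hq : 2 ≤ q) (ν : Finset (Fin q) → ℝ)
    (C : Finset (Fin q)) : ℝ :=
  ν C - Zlast q hq C * ν Finset.univ
    - ∑ i, Wvec q hq C i * shapleyTrunc q ν i

/-- The paired shapResidual `(ν(Z) + ν(1) - ν(1 - Z))/2 - Z_q ν(1) - W(Z)ᵀ φ̃`. -/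
noncomputable def pairedResidual (q : ℕ) (hq : 2 ≤ q) (ν : Finset (Fin q) → ℝ)
    (C : Finset (Fin q)) : ℝ :=
  (ν C + ν Finset.univ - ν (Finset.univ \ C)) / 2
    - Zlast q hq C * ν Finset.univ
    - ∑ i, Wvec q hq C i * shapleyTrunc q ν i

/-- The matrix `ℐ = E_{Z ∼ p}[(ν(Z) - Z_q ν(1) - W(Z)ᵀφ̃)² W(Z) W(Z)ᵀ]`. -/
noncomputable def Imat (q : ℕ) (hq : 2 ≤ q) (ν : Finset (Fin q) → ℝ) :
    Matrix (Fin (q - 1)) (Fin (q - 1)) ℝ :=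
  ∑ C ∈ properCoalitions q, kernelProb q C •
    Matrix.of (fun a b =>
      (shapResidual q hq ν C) ^ 2 * (Wvec q hq C a * Wvec q hq C b))

/-- The matrix `ℐ₂` built from the paired residuals (with factor `4`). -/
noncomputable def I2mat (q : ℕ) (hq : 2 ≤ q) (ν : Finset (Fin q) → ℝ) :
    Matrix (Fin (q - 1)) (Fin (q - 1)) ℝ :=
  ∑ C ∈ properCoalitions q, kernelProb q C •
    Matrix.of (fun a b =>
      4 * (pairedResidual q hq ν C) ^ 2 * (Wvec q hq C a * Wvec q hq C b))

/-- The matrix `𝒥 = E_{Z ∼ p}[W(Z) W(Z)ᵀ]`. -/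
noncomputable def Jmat (q : ℕ) (hq : 2 ≤ q) :
    Matrix (Fin (q - 1)) (Fin (q - 1)) ℝ :=
  ∑ C ∈ properCoalitions q, kernelProb q C •
    Matrix.of (fun a b => Wvec q hq C a * Wvec q hq C b)

/-! Complementation `C ↦ univ \ C` preserves the kernel weights and negates `W`, and the paired
residual of `C` is half the difference of the residuals `r(C)`, `r(univ \ C)` (`r = shapResidual`).
Averaging `ℐ` over this symmetry therefore gives
`ℐ - ℐ₂ / 4 = E[((r(C) + r(univ \ C)) / 2)² W Wᵀ]`, a nonnegative combination of the rank-one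
matrices `W Wᵀ`; and `𝒯 - 𝒯₂ = 𝒥⁻¹ (ℐ - ℐ₂ / 4) 𝒥⁻¹` with `𝒥` symmetric. -/

open Matrix

theorem Matrix.posSemidef_sum_smul_vecMulVec_self {ι n : Type*} [Fintype n] (s : Finset ι)
    (c : ι → ℝ) (w : ι → n → ℝ) (hc : ∀ i ∈ s, 0 ≤ c i) :
    (∑ i ∈ s, c i • vecMulVec (w i) (w i)).PosSemidef :=
  posSemidef_sum s fun i hi => by
    simpa using (posSemidef_vecMulVec_self_star (w i)).smul (hc i hi)

theorem Matrix.PosSemidef.inv_mul_mul_inv_sub_smul {n : Type*} [Fintype n] [DecidableEq n]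
    {J A B : Matrix n n ℝ} (hJ : J.IsHermitian) (hJu : IsUnit J) {c : ℝ} (hc : c ≠ 0)
    (h : (A - (c ^ 2)⁻¹ • B).PosSemidef) :
    (J⁻¹ * A * J⁻¹ - (c • J)⁻¹ * B * (c • J)⁻¹).PosSemidef := by
  have hdet : IsUnit J.det := (isUnit_iff_isUnit_det J).mp hJu
  have hsandwich : J⁻¹ * A * J⁻¹ - (c • J)⁻¹ * B * (c • J)⁻¹
      = (J⁻¹)ᴴ * (A - (c ^ 2)⁻¹ • B) * J⁻¹ := by
    have hinv : (c • J)⁻¹ = c⁻¹ • J⁻¹ :=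
      inv_eq_left_inv (by simp [smul_smul, hc, nonsing_inv_mul J hdet])
    rw [conjTranspose_nonsing_inv, hJ.eq, hinv]
    simp only [Matrix.smul_mul, Matrix.mul_smul, smul_smul, Matrix.mul_sub, Matrix.sub_mul,
      ← sq, inv_pow]
  rw [hsandwich]
  exact h.conjTranspose_mul_mul_same J⁻¹

section Coalitions

variable {q : ℕ}

theorem mem_properCoalitions {C : Finset (Fin q)} :
    C ∈ properCoalitions q ↔ C.Nonempty ∧ C ≠ univ := by
  simp [properCoalitions]

theorem sdiff_mem_properCoalitions {C : Finset (Fin q)} (h : C ∈ properCoalitions q) :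
    univ \ C ∈ properCoalitions q := by
  rw [mem_properCoalitions] at h ⊢
  rw [← compl_eq_univ_sdiff, Finset.nonempty_iff_ne_empty, Ne, compl_eq_empty_iff, Ne,
    compl_eq_univ_iff]
  exact ⟨h.2, h.1.ne_empty⟩

theorem sum_properCoalitions_sdiff {M : Type*} [AddCommMonoid M] (f : Finset (Fin q) → M) :
    ∑ C ∈ properCoalitions q, f (univ \ C) = ∑ C ∈ properCoalitions q, f C :=
  sum_nbij' (univ \ ·) (univ \ ·) (fun _ => sdiff_mem_properCoalitions)
    (fun _ => sdiff_mem_properCoalitions) (by simp) (by simp) (fun _ _ => rfl)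

theorem kernelWeight_sdiff {C : Finset (Fin q)} (h : C ∈ properCoalitions q) :
    kernelWeight q (univ \ C) = kernelWeight q C := by
  have hlt : C.card < q := by
    simpa using card_lt_card (ssubset_univ_iff.mpr (mem_properCoalitions.mp h).2)
  rw [kernelWeight, kernelWeight, card_univ_sdiff, Fintype.card_fin, Nat.choose_symm hlt.le,
    Nat.cast_sub hlt.le]
  ring

theorem kernelProb_sdiff {C : Finset (Fin q)} (h : C ∈ properCoalitions q) :
    kernelProb q (univ \ C) = kernelProb q C := by
  rw [kernelProb, kernelProb, kernelWeight_sdiff h]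

theorem kernelProb_nonneg (hq : 2 ≤ q) (C : Finset (Fin q)) : 0 ≤ kernelProb q C := by
  have hweight (C : Finset (Fin q)) : 0 ≤ kernelWeight q C := by
    have hcard : (C.card : ℝ) ≤ q := by exact_mod_cast card_le_univ C |>.trans_eq (by simp)
    have hq' : (2 : ℝ) ≤ q := by exact_mod_cast hq
    unfold kernelWeight
    exact div_nonneg (by linarith) (by positivity [sub_nonneg.mpr hcard])
  exact div_nonneg (hweight C) (sum_nonneg fun C' _ => hweight C')

theorem Zlast_sdiff (hq : 2 ≤ q) (C : Finset (Fin q)) :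
    Zlast q hq (univ \ C) = 1 - Zlast q hq C := by
  by_cases h : lastPlayer q hq ∈ C <;> simp [Zlast, h]

theorem Wvec_sdiff (hq : 2 ≤ q) (C : Finset (Fin q)) :
    Wvec q hq (univ \ C) = -Wvec q hq C := by
  ext i
  by_cases h : Fin.castLE (Nat.sub_le q 1) i ∈ C <;> simp [Wvec, Zlast_sdiff, h]

theorem pairedResidual_eq (hq : 2 ≤ q) (ν : Finset (Fin q) → ℝ) (C : Finset (Fin q)) :
    pairedResidual q hq ν C
      = (shapResidual q hq ν C - shapResidual q hq ν (univ \ C)) / 2 := by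
  simp only [pairedResidual, shapResidual, Zlast_sdiff, Wvec_sdiff, Pi.neg_apply, neg_mul,
    sum_neg_distrib]
  ring

end Coalitions

section CovarianceMatrices

variable (q : ℕ) (hq : 2 ≤ q) (ν : Finset (Fin q) → ℝ)

theorem Jmat_eq_sum_vecMulVec :
    Jmat q hq = ∑ C ∈ properCoalitions q,
      kernelProb q C • vecMulVec (Wvec q hq C) (Wvec q hq C) :=
  rfl

theorem Imat_eq_sum_vecMulVec :
    Imat q hq ν = ∑ C ∈ properCoalitions q,
      (kernelProb q C * shapResidual q hq ν C ^ 2) • vecMulVec (Wvec q hq C) (Wvec q hq C) := by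
  refine sum_congr rfl fun C _ => ?_
  ext a b
  simp [vecMulVec_apply, mul_assoc]

theorem Imat_eq_sum_sdiff_vecMulVec :
    Imat q hq ν = ∑ C ∈ properCoalitions q,
      (kernelProb q C * shapResidual q hq ν (univ \ C) ^ 2) •
        vecMulVec (Wvec q hq C) (Wvec q hq C) := by
  rw [Imat_eq_sum_vecMulVec, ← sum_properCoalitions_sdiff]
  refine sum_congr rfl fun C hC => ?_
  rw [kernelProb_sdiff hC, Wvec_sdiff, neg_vecMulVec, vecMulVec_neg, neg_neg]

theorem I2mat_eq_sum_vecMulVec :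
    I2mat q hq ν = ∑ C ∈ properCoalitions q,
      (kernelProb q C * (shapResidual q hq ν C - shapResidual q hq ν (univ \ C)) ^ 2) •
        vecMulVec (Wvec q hq C) (Wvec q hq C) := by
  refine sum_congr rfl fun C _ => ?_
  ext a b
  simp only [Matrix.smul_apply, of_apply, vecMulVec_apply, pairedResidual_eq, smul_eq_mul]
  ring

theorem Imat_sub_I2mat_eq_sum_vecMulVec :
    Imat q hq ν - (4 : ℝ)⁻¹ • I2mat q hq ν = ∑ C ∈ properCoalitions q,
      (kernelProb q C * ((shapResidual q hq ν C + shapResidual q hq ν (univ \ C)) / 2) ^ 2) •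
        vecMulVec (Wvec q hq C) (Wvec q hq C) := by
  calc Imat q hq ν - (4 : ℝ)⁻¹ • I2mat q hq ν
      = (2 : ℝ)⁻¹ • Imat q hq ν + (2 : ℝ)⁻¹ • Imat q hq ν - (4 : ℝ)⁻¹ • I2mat q hq ν := by
        module
    _ = _ := by
      nth_rw 2 [Imat_eq_sum_sdiff_vecMulVec]
      rw [Imat_eq_sum_vecMulVec, I2mat_eq_sum_vecMulVec]
      simp only [smul_sum, ← sum_add_distrib, ← sum_sub_distrib]
      refine sum_congr rfl fun C _ => ?_
      module

end CovarianceMatrices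

theorem covariance_difference_posSemidef_general (q : ℕ) (hq : 2 ≤ q)
    (ν : Finset (Fin q) → ℝ)
    (hJ : IsUnit (Jmat q hq)) :
    ((Jmat q hq)⁻¹ * Imat q hq ν * (Jmat q hq)⁻¹
      - ((2 : ℝ) • Jmat q hq)⁻¹ * I2mat q hq ν * ((2 : ℝ) • Jmat q hq)⁻¹).PosSemidef := by
  have hJherm : (Jmat q hq).IsHermitian := by
    rw [Jmat_eq_sum_vecMulVec]
    exact (posSemidef_sum_smul_vecMulVec_self _ _ _ fun C _ => kernelProb_nonneg hq C).isHermitian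
  have hdiff : (Imat q hq ν - ((2 : ℝ) ^ 2)⁻¹ • I2mat q hq ν).PosSemidef := by
    rw [show (2 : ℝ) ^ 2 = 4 by norm_num, Imat_sub_I2mat_eq_sum_vecMulVec]
    exact posSemidef_sum_smul_vecMulVec_self _ _ _ fun C _ =>
      mul_nonneg (kernelProb_nonneg hq C) (sq_nonneg _)
  exact hdiff.inv_mul_mul_inv_sub_smul hJherm hJ two_ne_zero

/-- the difference of the asymptotic covariance matrices
`𝒯 - 𝒯₂ = 𝒥⁻¹ ℐ 𝒥⁻¹ - 𝒥₂⁻¹ ℐ₂ 𝒥₂⁻¹` is positive semidefinite. -/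
theorem covariance_difference_posSemidef (q : ℕ) (hq : 2 ≤ q)
    (ν : Finset (Fin q) → ℝ) (hν : ν ∅ = 0)
    (hJ : IsUnit (Jmat q hq)) :
    ((Jmat q hq)⁻¹ * Imat q hq ν * (Jmat q hq)⁻¹
      - ((2 : ℝ) • Jmat q hq)⁻¹ * I2mat q hq ν * ((2 : ℝ) • Jmat q hq)⁻¹).PosSemidef :=
  covariance_difference_posSemidef_general q hq ν hJ
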